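/- arXiv:2503.10548 — 4 statements merged into one kernel-verified Lean document; each statement's English description precedes it below -/
import Mathlib

section
/- Let G be a singular digraph on a finite vertex type V with at least 2 vertices and let v ∈ V. If v is dextro-core-forbidden and laevo-core, then η(G − v) = η(G). Symmetrically, if v is dextro-core and laevo-core-forbidden, then η(G − v) = η(G). -/
open Matrix Finset
open scoped Classical

variable {V : Type*} [Fintype V] [DecidableEq V]
variable {W : Type*} [Fintype W] [DecidableEq W]

/-- Adjacency matrix of a digraph `G` on `V`. -/
noncomputable def adjMat (G : V → V → Prop) : Matrix V V ℝ :=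
  Matrix.of fun u v => if G u v then (1 : ℝ) else 0

/-- The kernel of a digraph. -/
def KerD (G : V → V → Prop) : Set (V → ℝ) := {x | (adjMat G).mulVec x = 0}

/-- The cokernel of a digraph. -/
def CoKerD (G : V → V → Prop) : Set (V → ℝ) := {x | (adjMat G)ᵀ.mulVec x = 0}

/-- A vector is full if it has no zero entries. -/
def Full (x : V → ℝ) : Prop := ∀ v, x v ≠ 0

/-- Dextro-nut digraph: the kernel is one-dimensional, spanned by a full vector. -/
def IsDextroNut (G : V → V → Prop) : Prop :=
  ∃ x ∈ KerD G, Full x ∧ ∀ y ∈ KerD G, ∃ c : ℝ, y = c • x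

/-- Laevo-nut digraph: the cokernel is one-dimensional, spanned by a full vector. -/
def IsLaevoNut (G : V → V → Prop) : Prop :=
  ∃ x ∈ CoKerD G, Full x ∧ ∀ y ∈ CoKerD G, ∃ c : ℝ, y = c • x

/-- Bi-nut digraph: both dextro-nut and laevo-nut. -/
def IsBiNut (G : V → V → Prop) : Prop := IsDextroNut G ∧ IsLaevoNut G

/-- Ambi-nut digraph: one full vector spans both kernel and cokernel. -/
def IsAmbiNut (G : V → V → Prop) : Prop :=
  ∃ x : V → ℝ, Full x ∧ x ∈ KerD G ∧ x ∈ CoKerD G ∧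
    (∀ y ∈ KerD G, ∃ c : ℝ, y = c • x) ∧ (∀ y ∈ CoKerD G, ∃ c : ℝ, y = c • x)

/-- Inter-nut digraph: the intersection of kernel and cokernel is one-dimensional,
spanned by a full vector. -/
def IsInterNut (G : V → V → Prop) : Prop :=
  ∃ x : V → ℝ, Full x ∧ x ∈ KerD G ∩ CoKerD G ∧
    ∀ y ∈ KerD G ∩ CoKerD G, ∃ c : ℝ, y = c • x

/-- Nullity of a digraph: dimension of the kernel of its adjacency matrix. -/
noncomputable def nullityD (G : V → V → Prop) : ℕ :=
  Module.finrank ℝ (LinearMap.ker (adjMat G).mulVecLin)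

/-- The digraph obtained by deleting vertex `v`. -/
def delV (G : V → V → Prop) (v : V) : {u : V // u ≠ v} → {u : V // u ≠ v} → Prop :=
  fun a b => G a.1 b.1


lemma sum_subtype_ne (v : V) (f : V → ℝ) (hf : f v = 0) :
    ∑ a : {u : V // u ≠ v}, f a.1 = ∑ u, f u := by
  rw [← Finset.sum_erase Finset.univ hf]
  exact (Finset.sum_subtype (Finset.univ.erase v) (fun x => by simp) f).symm

lemma ker_finrank_del (A : Matrix V V ℝ) (v : V)
    (h1 : ∀ x, A.mulVec x = 0 → x v = 0)
    (z : V → ℝ) (hz : Aᵀ.mulVec z = 0) (hzv : z v ≠ 0) :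
    Module.finrank ℝ (LinearMap.ker
      ((A.submatrix Subtype.val Subtype.val : Matrix {u : V // u ≠ v} {u : V // u ≠ v} ℝ)).mulVecLin)
      = Module.finrank ℝ (LinearMap.ker A.mulVecLin) := by
  set A' := (A.submatrix Subtype.val Subtype.val : Matrix {u : V // u ≠ v} {u : V // u ≠ v} ℝ) with hA'
  let E : ({u : V // u ≠ v} → ℝ) →ₗ[ℝ] (V → ℝ) :=
    { toFun := fun y u => if h : u = v then 0 else y ⟨u, h⟩
      map_add' := by intro a b; funext u; by_cases h : u = v <;> simp [h]
      map_smul' := by intro c a; funext u; by_cases h : u = v <;> simp [h] }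
  let R : (V → ℝ) →ₗ[ℝ] ({u : V // u ≠ v} → ℝ) := LinearMap.funLeft ℝ ℝ Subtype.val
  have hRE : ∀ y, R (E y) = y := by
    intro y; funext a
    show (fun u => if h : u = v then 0 else y ⟨u, h⟩) a.1 = y a
    exact dif_neg a.2
  have fact1 : ∀ (x : V → ℝ), x v = 0 → ∀ a : {u : V // u ≠ v},
      A'.mulVec (R x) a = A.mulVec x a.1 := by
    intro x hx a
    show ∑ b : {u : V // u ≠ v}, A a.1 b.1 * x b.1 = ∑ u, A a.1 u * x u
    exact sum_subtype_ne v (fun u => A a.1 u * x u) (by simp [hx])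
  have hEv : ∀ y, E y v = 0 := fun y => dif_pos rfl
  have fact2 : ∀ y, ∀ a : {u : V // u ≠ v},
      A.mulVec (E y) a.1 = A'.mulVec y a := by
    intro y a
    rw [← fact1 (E y) (hEv y) a, hRE]
  -- forward map
  have memf : ∀ x ∈ LinearMap.ker A.mulVecLin, R x ∈ LinearMap.ker A'.mulVecLin := by
    intro x hx
    rw [LinearMap.mem_ker] at hx ⊢
    funext a
    have hxv : x v = 0 := h1 x hx
    show A'.mulVec (R x) a = 0
    rw [fact1 x hxv a]
    exact congrFun hx a.1
  have memg : ∀ y ∈ LinearMap.ker A'.mulVecLin, E y ∈ LinearMap.ker A.mulVecLin := by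
    intro y hy
    rw [LinearMap.mem_ker] at hy ⊢
    have hne : ∀ u (h : u ≠ v), A.mulVec (E y) u = 0 := by
      intro u h
      rw [fact2 y ⟨u, h⟩]
      exact congrFun hy ⟨u, h⟩
    have hdot : z ⬝ᵥ A.mulVec (E y) = 0 := by
      rw [Matrix.dotProduct_mulVec, ← Matrix.mulVec_transpose, hz, zero_dotProduct]
    have hsum : z ⬝ᵥ A.mulVec (E y) = z v * A.mulVec (E y) v := by
      refine Finset.sum_eq_single v (fun u _ h => ?_) (by simp)
      rw [hne u h, mul_zero]
    have hv : A.mulVec (E y) v = 0 := by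
      have := hdot
      rw [hsum] at this
      exact (mul_eq_zero.mp this).resolve_left hzv
    funext u
    by_cases h : u = v
    · rw [h]; exact hv
    · exact hne u h
  let f : LinearMap.ker A.mulVecLin →ₗ[ℝ] LinearMap.ker A'.mulVecLin :=
    (R.comp (LinearMap.ker A.mulVecLin).subtype).codRestrict _
      (fun x => memf x.1 x.2)
  let g : LinearMap.ker A'.mulVecLin →ₗ[ℝ] LinearMap.ker A.mulVecLin :=
    (E.comp (LinearMap.ker A'.mulVecLin).subtype).codRestrict _
      (fun y => memg y.1 y.2)
  have hfg : f.comp g = LinearMap.id := by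
    apply LinearMap.ext; intro y
    apply Subtype.ext
    exact hRE y.1
  have hgf : g.comp f = LinearMap.id := by
    apply LinearMap.ext; intro x
    apply Subtype.ext
    funext u
    show (if h : u = v then 0 else x.1 u) = x.1 u
    by_cases h : u = v
    · rw [dif_pos h, h]; exact (h1 x.1 x.2).symm
    · rw [dif_neg h]
  exact (LinearEquiv.ofLinear g f hgf hfg).finrank_eq

lemma finrank_ker_transpose (B : Matrix V V ℝ) :
    Module.finrank ℝ (LinearMap.ker Bᵀ.mulVecLin)
      = Module.finrank ℝ (LinearMap.ker B.mulVecLin) := by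
  have h1 := LinearMap.finrank_range_add_finrank_ker B.mulVecLin
  have h2 := LinearMap.finrank_range_add_finrank_ker Bᵀ.mulVecLin
  have hr : Bᵀ.rank = B.rank := Matrix.rank_transpose B
  unfold Matrix.rank at hr
  omega

lemma adjMat_delV (G : V → V → Prop) (v : V) :
    adjMat (delV G v) = ((adjMat G).submatrix Subtype.val Subtype.val :
      Matrix {u : V // u ≠ v} {u : V // u ≠ v} ℝ) := rfl

theorem stmt5 (G : V → V → Prop) (hcard : 2 ≤ Fintype.card V)
    (hsing : 0 < nullityD G) (v : V) :
    ((∀ x ∈ KerD G, x v = 0) → (∃ x ∈ CoKerD G, x v ≠ 0) →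
      nullityD (delV G v) = nullityD G) ∧
    ((∃ x ∈ KerD G, x v ≠ 0) → (∀ x ∈ CoKerD G, x v = 0) →
      nullityD (delV G v) = nullityD G) := by
  constructor
  · intro hk hc
    obtain ⟨z, hz, hzv⟩ := hc
    show Module.finrank ℝ (LinearMap.ker (adjMat (delV G v)).mulVecLin)
      = Module.finrank ℝ (LinearMap.ker (adjMat G).mulVecLin)
    rw [adjMat_delV]
    exact ker_finrank_del (adjMat G) v (fun x hx => hk x hx) z hz hzv
  · intro hk hc
    obtain ⟨z, hz, hzv⟩ := hk
    have e2 : (adjMat (delV G v))ᵀ = (((adjMat G)ᵀ).submatrix Subtype.val Subtype.val :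
        Matrix {u : V // u ≠ v} {u : V // u ≠ v} ℝ) := by
      rw [adjMat_delV, Matrix.transpose_submatrix]
    have e3 := ker_finrank_del ((adjMat G)ᵀ) v (fun x hx => hc x hx) z
      (by rwa [Matrix.transpose_transpose]) hzv
    calc nullityD (delV G v)
        = Module.finrank ℝ (LinearMap.ker ((adjMat (delV G v))ᵀ).mulVecLin) :=
          (finrank_ker_transpose _).symm
      _ = Module.finrank ℝ (LinearMap.ker ((adjMat G)ᵀ).mulVecLin) := by rw [e2]; exact e3
      _ = Module.finrank ℝ (LinearMap.ker (adjMat G).mulVecLin) := finrank_ker_transpose _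
      _ = nullityD G := rfl
end

section
/- Let G be a bi-nut digraph on a finite vertex type V with at least 2 vertices and let w ∈ V be any vertex. Then G − w is a non-singular digraph, i.e. the adjacency matrix of the induced digraph on V ∖ {w} has trivial kernel (equivalently, nonzero determinant). -/
open Matrix Finset
open scoped Classical

variable {V : Type*} [Fintype V] [DecidableEq V]
variable {W : Type*} [Fintype W] [DecidableEq W]

/-!
Extend a kernel vector `x` of `A(G - w)` by `0` at `w` to a vector `x̃` on `V`. Then `A x̃`
vanishes off `w`, and pairing it with a full cokernel vector `c` gives `c w * (A x̃) w = cᵀ A x̃ = 0`,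
so `x̃ ∈ Ker G`. Hence `x̃` is a multiple of the full kernel vector, and since `x̃ w = 0` it is `0`.
-/

section ExtendByZero

variable {n R : Type*} [DecidableEq n] [CommSemiring R] {w : n}

def extendZero (w : n) (x : {u : n // u ≠ w} → R) : n → R :=
  fun v => if h : v = w then 0 else x ⟨v, h⟩

@[simp]
theorem extendZero_self (x : {u : n // u ≠ w} → R) : extendZero w x w = 0 := dif_pos rfl

@[simp]
theorem extendZero_val (x : {u : n // u ≠ w} → R) (u : {u : n // u ≠ w}) :
    extendZero w x u = x u := dif_neg u.2

theorem mulVec_extendZero_val [Fintype n] (M : Matrix n n R) (x : {u : n // u ≠ w} → R)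
    (u : {u : n // u ≠ w}) :
    (M *ᵥ extendZero w x) u = (M.submatrix Subtype.val Subtype.val *ᵥ x) u := by
  rw [mulVec, dotProduct, Fintype.sum_eq_add_sum_compl w, extendZero_self, mul_zero, zero_add,
    Finset.sum_subtype {w}ᶜ (p := (· ≠ w)) (F := inferInstance) (by simp)]
  simp only [extendZero_val, mulVec, dotProduct, submatrix_apply]

end ExtendByZero

section Field

variable {n K : Type*} [Fintype n] [Field K]

theorem apply_eq_zero_of_dotProduct_eq_zero {c v : n → K} {w : n} (hcv : c ⬝ᵥ v = 0)
    (hcw : c w ≠ 0) (hv : ∀ u ≠ w, v u = 0) : v w = 0 := by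
  rw [dotProduct, Finset.sum_eq_single w (fun u _ hu => by rw [hv u hu, mul_zero])
    (by simp)] at hcv
  exact (mul_eq_zero.mp hcv).resolve_left hcw

theorem mulVec_eq_zero_of_transpose_mulVec_eq_zero {M : Matrix n n K} {c z : n → K} {w : n}
    (hc : Mᵀ *ᵥ c = 0) (hcw : c w ≠ 0) (hz : ∀ u ≠ w, (M *ᵥ z) u = 0) : M *ᵥ z = 0 := by
  have hcz : c ⬝ᵥ M *ᵥ z = 0 := by
    rw [dotProduct_mulVec, ← mulVec_transpose, hc, zero_dotProduct]
  funext u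
  by_cases hu : u = w
  · exact hu ▸ apply_eq_zero_of_dotProduct_eq_zero hcz hcw hz
  · exact hz u hu

end Field

theorem eq_zero_of_eq_smul_of_apply_eq_zero {n K : Type*} [Field K] {k y : n → K} {d : K}
    {w : n} (hy : y = d • k) (hkw : k w ≠ 0) (hyw : y w = 0) : y = 0 := by
  have hd : d = 0 := by
    rw [hy, Pi.smul_apply, smul_eq_mul] at hyw
    exact (mul_eq_zero.mp hyw).resolve_right hkw
  rw [hy, hd, zero_smul]

theorem adjMat_delV_s7 {α : Type*} (G : α → α → Prop) (w : α) :
    adjMat (delV G w) = (adjMat G).submatrix Subtype.val Subtype.val :=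
  rfl

theorem stmt7_general (G : V → V → Prop) (hbi : IsBiNut G)
    (w : V) :
    ∀ x : {u : V // u ≠ w} → ℝ, (adjMat (delV G w)).mulVec x = 0 → x = 0 := by
  obtain ⟨⟨k, -, hkfull, hkspan⟩, ⟨c, hc, hcfull, -⟩⟩ := hbi
  intro x hx
  have hker : extendZero w x ∈ KerD G :=
    mulVec_eq_zero_of_transpose_mulVec_eq_zero hc (hcfull w) fun u hu => by
      rw [mulVec_extendZero_val (w := w) _ x ⟨u, hu⟩, ← adjMat_delV_s7, hx, Pi.zero_apply]
  obtain ⟨d, hd⟩ := hkspan _ hker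
  have hzero := eq_zero_of_eq_smul_of_apply_eq_zero hd (hkfull w) (extendZero_self x)
  funext u
  simpa using congrFun hzero u

theorem stmt7 (G : V → V → Prop) (hbi : IsBiNut G) (hcard : 2 ≤ Fintype.card V)
    (w : V) :
    ∀ x : {u : V // u ≠ w} → ℝ, (adjMat (delV G w)).mulVec x = 0 → x = 0 :=
  stmt7_general G hbi w
end

section
/- Cross-over of ambi-nut digraphs: let G be an ambi-nut digraph on V whose kernel and cokernel are both spanned by the full vector x, and H an ambi-nut digraph on W whose kernel and cokernel are both spanned by the full vector y. Suppose u* → v* is an arc of G and s* → t* is an arc of H with x u* = y s* and x v* = y t*. Let C be the digraph on V ⊕ W obtained from the disjoint union of G and H by deleting the arcs u* → v* and s* → t* and adding the arcs u* → t* and s* → v*. Then C is an ambi-nut digraph. -/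
open Matrix Finset
open scoped Classical

variable {V : Type*} [Fintype V] [DecidableEq V]
variable {W : Type*} [Fintype W] [DecidableEq W]

def crossOver (G : V → V → Prop) (us vs : V) (H : W → W → Prop) (ss ts : W) :
    (V ⊕ W) → (V ⊕ W) → Prop
  | Sum.inl a, Sum.inl b => G a b ∧ ¬(a = us ∧ b = vs)
  | Sum.inr p, Sum.inr q => H p q ∧ ¬(p = ss ∧ q = ts)
  | Sum.inl a, Sum.inr q => a = us ∧ q = ts
  | Sum.inr p, Sum.inl b => p = ss ∧ b = vs

lemma adjMat_flip (G : V → V → Prop) : (adjMat G)ᵀ = adjMat (fun a b => G b a) := by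
  ext a b; simp [adjMat, Matrix.transpose_apply]

lemma ker_flip (G : V → V → Prop) : KerD (fun a b => G b a) = CoKerD G := by
  simp only [KerD, CoKerD, adjMat_flip]

lemma coker_flip (G : V → V → Prop) : CoKerD (fun a b => G b a) = KerD G := by
  simp only [KerD, CoKerD, ← adjMat_flip, Matrix.transpose_transpose]

lemma row_inl (G : V → V → Prop) (us vs : V) (H : W → W → Prop) (ss ts : W)
    (hG : G us vs) (w : V ⊕ W → ℝ) (a : V) :
    (adjMat (crossOver G us vs H ss ts)).mulVec w (Sum.inl a) =
      (adjMat G).mulVec (fun b => w (Sum.inl b)) a +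
        (if a = us then w (Sum.inr ts) - w (Sum.inl vs) else 0) := by
  simp only [Matrix.mulVec, dotProduct, adjMat, Matrix.of_apply,
    Fintype.sum_sum_type, crossOver]
  by_cases ha : a = us
  · rw [if_pos ha]
    trans ((∑ b : V, ((if G a b then (1:ℝ) else 0) * w (Sum.inl b) -
        (if b = vs then (1:ℝ) else 0) * w (Sum.inl b))) +
      ∑ q : W, (if q = ts then (1:ℝ) else 0) * w (Sum.inr q))
    · congr 1
      · apply Finset.sum_congr rfl
        intro b _
        by_cases hb : b = vs <;> simp [ha, hb, hG]
      · apply Finset.sum_congr rfl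
        intro q _
        simp [ha]
    · rw [Finset.sum_sub_distrib]
      have e2 : ∑ b : V, (if b = vs then (1:ℝ) else 0) * w (Sum.inl b)
          = w (Sum.inl vs) := by simp [ite_mul]
      have e3 : ∑ q : W, (if q = ts then (1:ℝ) else 0) * w (Sum.inr q)
          = w (Sum.inr ts) := by simp [ite_mul]
      rw [e2, e3]; ring
  · rw [if_neg ha]
    trans ((∑ b : V, (if G a b then (1:ℝ) else 0) * w (Sum.inl b)) + ∑ _q : W, (0:ℝ))
    · congr 1
      · apply Finset.sum_congr rfl
        intro b _
        simp [ha]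
      · apply Finset.sum_congr rfl
        intro q _
        simp [ha]
    · simp

lemma row_inr (G : V → V → Prop) (us vs : V) (H : W → W → Prop) (ss ts : W)
    (hH : H ss ts) (w : V ⊕ W → ℝ) (p : W) :
    (adjMat (crossOver G us vs H ss ts)).mulVec w (Sum.inr p) =
      (adjMat H).mulVec (fun q => w (Sum.inr q)) p +
        (if p = ss then w (Sum.inl vs) - w (Sum.inr ts) else 0) := by
  simp only [Matrix.mulVec, dotProduct, adjMat, Matrix.of_apply,
    Fintype.sum_sum_type, crossOver]
  by_cases hp : p = ss
  · rw [if_pos hp]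
    trans ((∑ b : V, (if b = vs then (1:ℝ) else 0) * w (Sum.inl b)) +
      ∑ q : W, ((if H p q then (1:ℝ) else 0) * w (Sum.inr q) -
        (if q = ts then (1:ℝ) else 0) * w (Sum.inr q)))
    · congr 1
      · apply Finset.sum_congr rfl
        intro b _
        simp [hp]
      · apply Finset.sum_congr rfl
        intro q _
        by_cases hq : q = ts <;> simp [hp, hq, hH]
    · rw [Finset.sum_sub_distrib]
      have e2 : ∑ q : W, (if q = ts then (1:ℝ) else 0) * w (Sum.inr q)
          = w (Sum.inr ts) := by simp [ite_mul]
      have e3 : ∑ b : V, (if b = vs then (1:ℝ) else 0) * w (Sum.inl b)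
          = w (Sum.inl vs) := by simp [ite_mul]
      rw [e2, e3]; ring
  · rw [if_neg hp]
    trans ((∑ _b : V, (0:ℝ)) + ∑ q : W, (if H p q then (1:ℝ) else 0) * w (Sum.inr q))
    · congr 1
      · apply Finset.sum_congr rfl
        intro b _
        simp [hp]
      · apply Finset.sum_congr rfl
        intro q _
        simp [hp]
    · simp

lemma kerMain (G : V → V → Prop) (us vs : V) (H : W → W → Prop) (ss ts : W)
    (x : V → ℝ) (hxK : x ∈ KerD G) (hxC : x ∈ CoKerD G) (hxus : x us ≠ 0)
    (hxSpanK : ∀ z ∈ KerD G, ∃ c : ℝ, z = c • x)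
    (y : W → ℝ) (hyK : y ∈ KerD H) (hyC : y ∈ CoKerD H) (hyss : y ss ≠ 0) (hyts : y ts ≠ 0)
    (hySpanK : ∀ z ∈ KerD H, ∃ c : ℝ, z = c • y)
    (harcG : G us vs) (harcH : H ss ts) (h2 : x vs = y ts) :
    Sum.elim x y ∈ KerD (crossOver G us vs H ss ts) ∧
      ∀ w ∈ KerD (crossOver G us vs H ss ts), ∃ c : ℝ, w = c • Sum.elim x y := by
  have hx0 : (adjMat G).mulVec x = 0 := hxK
  have hy0 : (adjMat H).mulVec y = 0 := hyK
  have hxv : (adjMat G).vecMul x = 0 := by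
    have := hxC
    rwa [CoKerD, Set.mem_setOf_eq, Matrix.mulVec_transpose] at this
  have hyv : (adjMat H).vecMul y = 0 := by
    have := hyC
    rwa [CoKerD, Set.mem_setOf_eq, Matrix.mulVec_transpose] at this
  constructor
  · show (adjMat (crossOver G us vs H ss ts)).mulVec (Sum.elim x y) = 0
    funext i
    cases i with
    | inl a =>
      rw [row_inl G us vs H ss ts harcG]
      show (adjMat G).mulVec x a + (if a = us then y ts - x vs else 0) = (0 : ℝ)
      have := congrFun hx0 a
      simp only [Pi.zero_apply] at this
      rw [this, h2]
      simp
    | inr p =>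
      rw [row_inr G us vs H ss ts harcH]
      show (adjMat H).mulVec y p + (if p = ss then x vs - y ts else 0) = (0 : ℝ)
      have := congrFun hy0 p
      simp only [Pi.zero_apply] at this
      rw [this, h2]
      simp
  · intro w hw
    have hw0 : (adjMat (crossOver G us vs H ss ts)).mulVec w = 0 := hw
    have hrow1 : ∀ a : V, (adjMat G).mulVec (fun b => w (Sum.inl b)) a +
        (if a = us then w (Sum.inr ts) - w (Sum.inl vs) else 0) = 0 := by
      intro a
      have := congrFun hw0 (Sum.inl a)
      rw [row_inl G us vs H ss ts harcG] at this
      simpa using this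
    have hrow2 : ∀ p : W, (adjMat H).mulVec (fun q => w (Sum.inr q)) p +
        (if p = ss then w (Sum.inl vs) - w (Sum.inr ts) else 0) = 0 := by
      intro p
      have := congrFun hw0 (Sum.inr p)
      rw [row_inr G us vs H ss ts harcH] at this
      simpa using this
    have hne1 : ∀ a : V, a ≠ us → (adjMat G).mulVec (fun b => w (Sum.inl b)) a = 0 := by
      intro a ha; have := hrow1 a; simpa [ha] using this
    have hdot1 : x ⬝ᵥ (adjMat G).mulVec (fun b => w (Sum.inl b)) = 0 := by
      rw [Matrix.dotProduct_mulVec, hxv, zero_dotProduct]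
    have hus : (adjMat G).mulVec (fun b => w (Sum.inl b)) us = 0 := by
      have hsum : x ⬝ᵥ (adjMat G).mulVec (fun b => w (Sum.inl b))
          = x us * (adjMat G).mulVec (fun b => w (Sum.inl b)) us := by
        rw [dotProduct]
        refine Finset.sum_eq_single us (fun a _ ha => ?_) (by simp)
        rw [hne1 a ha, mul_zero]
      rw [hsum] at hdot1
      exact (mul_eq_zero.mp hdot1).resolve_left hxus
    have hker1 : (adjMat G).mulVec (fun b => w (Sum.inl b)) = 0 := by
      funext a
      by_cases ha : a = us
      · rw [ha]; exact hus
      · exact hne1 a ha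
    obtain ⟨c, hc⟩ := hxSpanK _ hker1
    have hne2 : ∀ p : W, p ≠ ss → (adjMat H).mulVec (fun q => w (Sum.inr q)) p = 0 := by
      intro p hp; have := hrow2 p; simpa [hp] using this
    have hdot2 : y ⬝ᵥ (adjMat H).mulVec (fun q => w (Sum.inr q)) = 0 := by
      rw [Matrix.dotProduct_mulVec, hyv, zero_dotProduct]
    have hss : (adjMat H).mulVec (fun q => w (Sum.inr q)) ss = 0 := by
      have hsum : y ⬝ᵥ (adjMat H).mulVec (fun q => w (Sum.inr q))
          = y ss * (adjMat H).mulVec (fun q => w (Sum.inr q)) ss := by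
        rw [dotProduct]
        refine Finset.sum_eq_single ss (fun p _ hp => ?_) (by simp)
        rw [hne2 p hp, mul_zero]
      rw [hsum] at hdot2
      exact (mul_eq_zero.mp hdot2).resolve_left hyss
    have hker2 : (adjMat H).mulVec (fun q => w (Sum.inr q)) = 0 := by
      funext p
      by_cases hp : p = ss
      · rw [hp]; exact hss
      · exact hne2 p hp
    obtain ⟨d, hd⟩ := hySpanK _ hker2
    -- from row us: w (inr ts) = w (inl vs)
    have hrel : w (Sum.inr ts) = w (Sum.inl vs) := by
      have := hrow1 us
      rw [if_pos rfl, hus] at this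
      linarith
    have hwl : ∀ a : V, w (Sum.inl a) = c * x a := fun a => congrFun hc a
    have hwr : ∀ q : W, w (Sum.inr q) = d * y q := fun q => congrFun hd q
    have hdc : d = c := by
      have : d * y ts = c * y ts := by
        rw [← hwr ts, hrel, hwl vs, h2]
      exact mul_right_cancel₀ hyts this
    refine ⟨c, ?_⟩
    funext i
    cases i with
    | inl a => simpa using hwl a
    | inr q => simpa [hdc] using hwr q

lemma crossOver_flip (G : V → V → Prop) (us vs : V) (H : W → W → Prop) (ss ts : W) :
    (fun i j => crossOver G us vs H ss ts j i) =
      crossOver (fun a b => G b a) vs us (fun p q => H q p) ts ss := by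
  funext i j
  cases i <;> cases j <;> simp [crossOver] <;> tauto

theorem stmt16 (G : V → V → Prop) (us vs : V) (H : W → W → Prop) (ss ts : W)
    (x : V → ℝ) (hxfull : Full x) (hxK : x ∈ KerD G) (hxC : x ∈ CoKerD G)
    (hxSpanK : ∀ z ∈ KerD G, ∃ c : ℝ, z = c • x)
    (hxSpanC : ∀ z ∈ CoKerD G, ∃ c : ℝ, z = c • x)
    (y : W → ℝ) (hyfull : Full y) (hyK : y ∈ KerD H) (hyC : y ∈ CoKerD H)
    (hySpanK : ∀ z ∈ KerD H, ∃ c : ℝ, z = c • y)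
    (hySpanC : ∀ z ∈ CoKerD H, ∃ c : ℝ, z = c • y)
    (harcG : G us vs) (harcH : H ss ts)
    (h1 : x us = y ss) (h2 : x vs = y ts) :
    IsAmbiNut (crossOver G us vs H ss ts) := by
  obtain ⟨hmemK, hspanK⟩ := kerMain G us vs H ss ts x hxK hxC (hxfull us) hxSpanK
    y hyK hyC (hyfull ss) (hyfull ts) hySpanK harcG harcH h2
  have hxK' : x ∈ KerD (fun a b => G b a) := by rw [ker_flip]; exact hxC
  have hxC' : x ∈ CoKerD (fun a b => G b a) := by rw [coker_flip]; exact hxK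
  have hxSpanC' : ∀ z ∈ KerD (fun a b => G b a), ∃ c : ℝ, z = c • x := by
    rw [ker_flip]; exact hxSpanC
  have hyK' : y ∈ KerD (fun p q => H q p) := by rw [ker_flip]; exact hyC
  have hyC' : y ∈ CoKerD (fun p q => H q p) := by rw [coker_flip]; exact hyK
  have hySpanC' : ∀ z ∈ KerD (fun p q => H q p), ∃ c : ℝ, z = c • y := by
    rw [ker_flip]; exact hySpanC
  obtain ⟨hmemC, hspanC⟩ := kerMain (fun a b => G b a) vs us (fun p q => H q p) ts ss
    x hxK' hxC' (hxfull vs) hxSpanC' y hyK' hyC' (hyfull ts) (hyfull ss) hySpanC'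
    harcG harcH h1
  have hcoker : CoKerD (crossOver G us vs H ss ts) =
      KerD (crossOver (fun a b => G b a) vs us (fun p q => H q p) ts ss) := by
    rw [← crossOver_flip, ker_flip]
  refine ⟨Sum.elim x y, ?_, hmemK, ?_, hspanK, ?_⟩
  · intro v
    cases v with
    | inl a => exact hxfull a
    | inr q => exact hyfull q
  · rw [hcoker]; exact hmemC
  · rw [hcoker]; exact hspanC
end

section
/- Let (G, r) be a gadget on a finite vertex type V with associated full vector x, and suppose its demand is 0, i.e. Σ_{u with r → u} x u = 0. Then G is an ambi-nut digraph, with both Ker G and CoKer G spanned by x. -/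
open Matrix Finset
open scoped Classical

variable {V : Type*} [Fintype V] [DecidableEq V]
variable {W : Type*} [Fintype W] [DecidableEq W]

/-- A gadget: a digraph with root `r` and full vector `x` spanning the
one-dimensional kernels of both `A(G)` and `A(G)ᵀ` with row `r` deleted. -/
def IsGadget (G : V → V → Prop) (r : V) (x : V → ℝ) : Prop :=
  Full x ∧
  (∀ v : V, v ≠ r → ∑ u ∈ Finset.univ.filter (fun u => G v u), x u = 0) ∧
  (∀ v : V, v ≠ r → ∑ u ∈ Finset.univ.filter (fun u => G u v), x u = 0) ∧
  (∀ y : V → ℝ,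
    (∀ v : V, v ≠ r → ∑ u ∈ Finset.univ.filter (fun u => G v u), y u = 0) →
    ∃ c : ℝ, y = c • x) ∧
  (∀ y : V → ℝ,
    (∀ v : V, v ≠ r → ∑ u ∈ Finset.univ.filter (fun u => G u v), y u = 0) →
    ∃ c : ℝ, y = c • x)

lemma mulVec_adj' (G : V → V → Prop) (x : V → ℝ) (v : V) :
    (adjMat G).mulVec x v = ∑ u ∈ Finset.univ.filter (fun u => G v u), x u := by
  simp [adjMat, Matrix.mulVec, dotProduct, Finset.sum_filter, ite_mul]

lemma mulVecT_adj' (G : V → V → Prop) (x : V → ℝ) (v : V) :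
    (adjMat G)ᵀ.mulVec x v = ∑ u ∈ Finset.univ.filter (fun u => G u v), x u := by
  simp [adjMat, Matrix.mulVec, dotProduct, Matrix.transpose_apply, Finset.sum_filter, ite_mul]

theorem stmt18 (G : V → V → Prop) (r : V) (x : V → ℝ) (hg : IsGadget G r x)
    (hdem : ∑ u ∈ Finset.univ.filter (fun u => G r u), x u = 0) :
    x ∈ KerD G ∧ x ∈ CoKerD G ∧
    (∀ y ∈ KerD G, ∃ c : ℝ, y = c • x) ∧
    (∀ y ∈ CoKerD G, ∃ c : ℝ, y = c • x) ∧
    IsAmbiNut G := by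
  obtain ⟨hfull, hrow, hcol, hspanr, hspanc⟩ := hg
  have hker : x ∈ KerD G := by
    funext v
    rw [mulVec_adj', Pi.zero_apply]
    by_cases hv : v = r
    · subst hv; exact hdem
    · exact hrow v hv
  -- column sum at r is zero
  have hS : ∑ u ∈ Finset.univ.filter (fun u => G u r), x u = 0 := by
    have h1 : ∑ v, x v * (adjMat G).mulVec x v = 0 := by
      have := hker
      simp only [KerD, Set.mem_setOf_eq] at this
      rw [this]
      simp
    have h2 : ∑ v, x v * (adjMat G).mulVec x v
        = ∑ u, ((adjMat G)ᵀ.mulVec x u) * x u := by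
      simp only [Matrix.mulVec, dotProduct, Matrix.transpose_apply,
        Finset.mul_sum, Finset.sum_mul]
      rw [Finset.sum_comm]
      apply Finset.sum_congr rfl; intro u _
      apply Finset.sum_congr rfl; intro v _
      ring
    have h3 : ∀ u, u ≠ r → ((adjMat G)ᵀ.mulVec x u) * x u = 0 := by
      intro u hu
      rw [mulVecT_adj', hcol u hu, zero_mul]
    have h4 : ∑ u, ((adjMat G)ᵀ.mulVec x u) * x u
        = ((adjMat G)ᵀ.mulVec x r) * x r := by
      rw [Finset.sum_eq_single r]
      · intro b _ hb; exact h3 b hb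
      · intro h; exact absurd (Finset.mem_univ r) h
    have h5 : ((adjMat G)ᵀ.mulVec x r) * x r = 0 := by
      rw [← h4, ← h2, h1]
    have := mul_eq_zero.mp h5
    rcases this with h | h
    · rw [mulVecT_adj'] at h; exact h
    · exact absurd h (hfull r)
  have hcok : x ∈ CoKerD G := by
    funext v
    rw [mulVecT_adj', Pi.zero_apply]
    by_cases hv : v = r
    · subst hv; exact hS
    · exact hcol v hv
  have hsk : ∀ y ∈ KerD G, ∃ c : ℝ, y = c • x := by
    intro y hy
    apply hspanr
    intro v _
    have : (adjMat G).mulVec y v = 0 := by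
      simp only [KerD, Set.mem_setOf_eq] at hy; rw [hy]; rfl
    rwa [mulVec_adj'] at this
  have hsc : ∀ y ∈ CoKerD G, ∃ c : ℝ, y = c • x := by
    intro y hy
    apply hspanc
    intro v _
    have : (adjMat G)ᵀ.mulVec y v = 0 := by
      simp only [CoKerD, Set.mem_setOf_eq] at hy; rw [hy]; rfl
    rwa [mulVecT_adj'] at this
  exact ⟨hker, hcok, hsk, hsc, ⟨x, hfull, hker, hcok, hsk, hsc⟩⟩
end
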